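/- arXiv:2104.01006 — 2 statements merged into one kernel-verified Lean document; each statement's English description precedes it below -/
import Mathlib

section
/- With Ũ ∈ ℂ^{n×(ℓ_p+1)} and K ∈ ℂ^{(ℓ_q+1)×n} the quadrature-based factor matrices defined from transfer function data, the matrix L̃ = K E Ũ ∈ ℂ^{(ℓ_q+1)×(ℓ_p+1)} has entries: L̃_{k,j} = −φ_k ρ_j (H(iω_k) − H(iζ_j))/(iω_k − iζ_j) for 1 ≤ k ≤ ℓ_q and 1 ≤ j ≤ ℓ_p; L̃_{k,ℓ_p+1} = φ_k ρ_∞ H(iω_k) for 1 ≤ k ≤ ℓ_q; L̃_{ℓ_q+1,j} = φ_∞ ρ_j H(iζ_j) for 1 ≤ j ≤ ℓ_p; and L̃_{ℓ_q+1,ℓ_p+1} = φ_∞ ρ_∞ M₀. -/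
open Matrix Complex

/-- The transfer function `H(s) = cᵀ (s E − A)⁻¹ b` of the LTI system. -/
noncomputable def transferFun {n : ℕ} (E A : Matrix (Fin n) (Fin n) ℂ)
    (b c : Fin n → ℂ) (s : ℂ) : ℂ :=
  c ⬝ᵥ ((s • E - A)⁻¹ *ᵥ b)

/-- The zeroth Markov parameter `M₀ = cᵀ E⁻¹ b`. -/
noncomputable def markov0 {n : ℕ} (E : Matrix (Fin n) (Fin n) ℂ)
    (b c : Fin n → ℂ) : ℂ :=
  c ⬝ᵥ (E⁻¹ *ᵥ b)

/-- Auxiliary: an entry of `K * E * Ut` when the row of `K` is a scaled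
`c ᵥ* P` and the column of `Ut` is a scaled `Q *ᵥ b`. -/
lemma quad_entry_eq {n m p : ℕ} (E P Q : Matrix (Fin n) (Fin n) ℂ)
    (K : Matrix (Fin m) (Fin n) ℂ) (Ut : Matrix (Fin n) (Fin p) ℂ)
    (b c : Fin n → ℂ) (a r : ℂ) (k : Fin m) (j : Fin p)
    (hK : ∀ i, K k i = a * (c ᵥ* P) i)
    (hU : ∀ i, Ut i j = r * ((Q *ᵥ b) i)) :
    (K * E * Ut) k j = a * r * (c ᵥ* (P * E * Q) ⬝ᵥ b) := by
  have h1 : (K * E * Ut) k j = (fun i => K k i) ⬝ᵥ (E *ᵥ fun i => Ut i j) := by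
    simp only [mul_apply, mulVec, dotProduct, Finset.mul_sum, Finset.sum_mul]
    rw [Finset.sum_comm]
    exact Finset.sum_congr rfl fun i _ => Finset.sum_congr rfl fun i' _ => by ring
  have hKr : (fun i => K k i) = a • (c ᵥ* P) := funext fun i => by
    rw [hK]; simp [smul_eq_mul]
  have hUc : (fun i => Ut i j) = r • (Q *ᵥ b) := funext fun i => by
    rw [hU]; simp [smul_eq_mul]
  rw [h1, hKr, hUc, mulVec_smul, smul_dotProduct, dotProduct_smul,
    smul_eq_mul, smul_eq_mul, dotProduct_mulVec, vecMul_vecMul,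
    dotProduct_mulVec, vecMul_vecMul]
  ring

/-- Auxiliary resolvent identity. -/
lemma resolvent_prod {n : ℕ} (E A : Matrix (Fin n) (Fin n) ℂ) (x y : ℂ)
    (hxy : x ≠ y)
    (hx : IsUnit (x • E - A).det) (hy : IsUnit (y • E - A).det) :
    (x • E - A)⁻¹ * E * (y • E - A)⁻¹ =
      (y - x)⁻¹ • ((x • E - A)⁻¹ - (y • E - A)⁻¹) := by
  have key : (x • E - A)⁻¹ - (y • E - A)⁻¹ =
      (y - x) • ((x • E - A)⁻¹ * E * (y • E - A)⁻¹) := by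
    have h1 : (x • E - A)⁻¹ * ((y • E - A) - (x • E - A)) * (y • E - A)⁻¹ =
        (x • E - A)⁻¹ - (y • E - A)⁻¹ := by
      rw [Matrix.mul_sub, Matrix.sub_mul, Matrix.mul_assoc ((x • E - A)⁻¹),
        Matrix.mul_nonsing_inv _ hy, Matrix.nonsing_inv_mul _ hx,
        Matrix.mul_one, Matrix.one_mul]
    have h2 : (y • E - A) - (x • E - A) = (y - x) • E := by
      rw [sub_smul]; abel
    rw [← h1, h2, Matrix.mul_smul, Matrix.smul_mul]
  rw [key, smul_smul, inv_mul_cancel₀ (sub_ne_zero.2 (Ne.symm hxy)), one_smul]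

/-- Auxiliary: `vecMul` commutes with matrix scalar multiplication. -/
lemma vecMul_smul_mat {n : ℕ} (v : Fin n → ℂ) (s : ℂ)
    (M : Matrix (Fin n) (Fin n) ℂ) : v ᵥ* (s • M) = s • (v ᵥ* M) := by
  funext i
  simp only [vecMul, dotProduct, Matrix.smul_apply, smul_eq_mul, Pi.smul_apply,
    Finset.mul_sum]
  exact Finset.sum_congr rfl fun j _ => by ring

/-- Proposition 1 (quadrature-based Loewner matrix from data):
the entries of `L̃ = K E Ut` are expressible via transfer function samples. -/
theorem quad_loewner_entries {n ℓp ℓq : ℕ} (hn : 0 < n)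
    (E A : Matrix (Fin n) (Fin n) ℂ) (hE : IsUnit E.det)
    (b c : Fin n → ℂ)
    (ζ : Fin ℓp → ℝ) (ω : Fin ℓq → ℝ)
    (ρ : Fin ℓp → ℝ) (ρinf : ℝ) (φ : Fin ℓq → ℝ) (φinf : ℝ)
    (hnodes : ∀ (k : Fin ℓq) (j : Fin ℓp), ω k ≠ ζ j)
    (hζ : ∀ j : Fin ℓp, IsUnit ((Complex.I * (ζ j : ℂ)) • E - A).det)
    (hω : ∀ k : Fin ℓq, IsUnit ((Complex.I * (ω k : ℂ)) • E - A).det)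
    (Ut : Matrix (Fin n) (Fin (ℓp + 1)) ℂ)
    (K : Matrix (Fin (ℓq + 1)) (Fin n) ℂ)
    (hUt : ∀ (i : Fin n) (j : Fin ℓp),
      Ut i (Fin.castSucc j) =
        (ρ j : ℂ) * ((((Complex.I * (ζ j : ℂ)) • E - A)⁻¹ *ᵥ b) i))
    (hUtinf : ∀ i : Fin n, Ut i (Fin.last ℓp) = (ρinf : ℂ) * ((E⁻¹ *ᵥ b) i))
    (hK : ∀ (k : Fin ℓq) (i : Fin n),
      K (Fin.castSucc k) i =
        (φ k : ℂ) * ((c ᵥ* ((Complex.I * (ω k : ℂ)) • E - A)⁻¹) i))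
    (hKinf : ∀ i : Fin n, K (Fin.last ℓq) i = (φinf : ℂ) * ((c ᵥ* E⁻¹) i)) :
    (∀ (k : Fin ℓq) (j : Fin ℓp),
      (K * E * Ut) (Fin.castSucc k) (Fin.castSucc j) =
        -((φ k : ℂ) * (ρ j : ℂ)) *
          ((transferFun E A b c (Complex.I * (ω k : ℂ)) -
              transferFun E A b c (Complex.I * (ζ j : ℂ))) /
            (Complex.I * (ω k : ℂ) - Complex.I * (ζ j : ℂ)))) ∧
    (∀ k : Fin ℓq,
      (K * E * Ut) (Fin.castSucc k) (Fin.last ℓp) =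
        (φ k : ℂ) * (ρinf : ℂ) * transferFun E A b c (Complex.I * (ω k : ℂ))) ∧
    (∀ j : Fin ℓp,
      (K * E * Ut) (Fin.last ℓq) (Fin.castSucc j) =
        (φinf : ℂ) * (ρ j : ℂ) * transferFun E A b c (Complex.I * (ζ j : ℂ))) ∧
    (K * E * Ut) (Fin.last ℓq) (Fin.last ℓp) =
      (φinf : ℂ) * (ρinf : ℂ) * markov0 E b c := by
  have htf : ∀ s : ℂ, transferFun E A b c s = c ᵥ* (s • E - A)⁻¹ ⬝ᵥ b := by
    intro s; rw [transferFun, dotProduct_mulVec]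
  have hm0 : markov0 E b c = c ᵥ* E⁻¹ ⬝ᵥ b := by
    rw [markov0, dotProduct_mulVec]
  refine ⟨?_, ?_, ?_, ?_⟩
  · intro k j
    have hxy : Complex.I * (ω k : ℂ) ≠ Complex.I * (ζ j : ℂ) := by
      intro h
      exact hnodes k j (by exact_mod_cast mul_left_cancel₀ Complex.I_ne_zero h)
    rw [quad_entry_eq E ((Complex.I * (ω k : ℂ)) • E - A)⁻¹
        ((Complex.I * (ζ j : ℂ)) • E - A)⁻¹ K Ut b c _ _ _ _ (hK k)
        (fun i => hUt i j),
      resolvent_prod E A _ _ hxy (hω k) (hζ j)]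
    rw [vecMul_smul_mat, smul_dotProduct, smul_eq_mul, Matrix.vecMul_sub,
      sub_dotProduct, ← htf, ← htf]
    rw [show Complex.I * (ζ j : ℂ) - Complex.I * (ω k : ℂ) =
      -(Complex.I * (ω k : ℂ) - Complex.I * (ζ j : ℂ)) by ring, inv_neg,
      div_eq_mul_inv]
    ring
  · intro k
    rw [quad_entry_eq E ((Complex.I * (ω k : ℂ)) • E - A)⁻¹ E⁻¹ K Ut b c _ _ _ _
        (hK k) hUtinf,
      Matrix.mul_assoc, Matrix.mul_nonsing_inv _ hE, Matrix.mul_one, htf]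
  · intro j
    rw [quad_entry_eq E E⁻¹ ((Complex.I * (ζ j : ℂ)) • E - A)⁻¹ K Ut b c _ _ _ _
        hKinf (fun i => hUt i j),
      Matrix.nonsing_inv_mul _ hE, Matrix.one_mul, htf]
  · rw [quad_entry_eq E E⁻¹ E⁻¹ K Ut b c _ _ _ _ hKinf hUtinf,
      Matrix.nonsing_inv_mul _ hE, Matrix.one_mul, hm0]
end

section
/- With Ũ ∈ ℂ^{n×(ℓ_p+1)} and K ∈ ℂ^{(ℓ_q+1)×n} the quadrature-based factor matrices defined from transfer function data, the matrix M̃ = K A Ũ ∈ ℂ^{(ℓ_q+1)×(ℓ_p+1)} has entries: M̃_{k,j} = −φ_k ρ_j (iω_k H(iω_k) − iζ_j H(iζ_j))/(iω_k − iζ_j) for 1 ≤ k ≤ ℓ_q and 1 ≤ j ≤ ℓ_p; M̃_{k,ℓ_p+1} = φ_k ρ_∞ (iω_k H(iω_k) − M₀) for 1 ≤ k ≤ ℓ_q; M̃_{ℓ_q+1,j} = φ_∞ ρ_j (iζ_j H(iζ_j) − M₀) for 1 ≤ j ≤ ℓ_p; and M̃_{ℓ_q+1,ℓ_p+1} = φ_∞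 ρ_∞ M₁. -/
open Matrix Complex

/-- The first Markov parameter `M₁ = cᵀ E⁻¹ A E⁻¹ b`. -/
noncomputable def markov1 {n : ℕ} (E A : Matrix (Fin n) (Fin n) ℂ)
    (b c : Fin n → ℂ) : ℂ :=
  c ⬝ᵥ ((E⁻¹ * A * E⁻¹) *ᵥ b)

lemma triple_entry {n p q : ℕ} (K : Matrix (Fin q) (Fin n) ℂ) (A : Matrix (Fin n) (Fin n) ℂ)
    (Ut : Matrix (Fin n) (Fin p) ℂ) (r : Fin q) (s : Fin p)
    (x v : Fin n → ℂ) (hx : ∀ i, K r i = x i) (hv : ∀ i, Ut i s = v i) :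
    (K * A * Ut) r s = x ⬝ᵥ (A *ᵥ v) := by
  simp only [Matrix.mul_apply, dotProduct, Matrix.mulVec, hx, hv,
    Finset.mul_sum, Finset.sum_mul]
  rw [Finset.sum_comm]
  exact Finset.sum_congr rfl fun i _ => Finset.sum_congr rfl fun m _ => by ring

lemma key1 {n : ℕ} (E A : Matrix (Fin n) (Fin n) ℂ) (s t : ℂ)
    (hs : IsUnit (s • E - A).det) (ht : IsUnit (t • E - A).det) (hst : s ≠ t) :
    (s • E - A)⁻¹ * A * (t • E - A)⁻¹ =
      (s - t)⁻¹ • (t • (t • E - A)⁻¹ - s • (s • E - A)⁻¹) := by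
  have hd : s - t ≠ 0 := sub_ne_zero.mpr hst
  have hA : (s - t) • A = t • (s • E - A) - s • (t • E - A) := by
    rw [smul_sub, smul_sub, sub_smul, smul_smul, smul_smul, mul_comm]
    abel
  have : (s - t) • ((s • E - A)⁻¹ * A * (t • E - A)⁻¹)
      = t • (t • E - A)⁻¹ - s • (s • E - A)⁻¹ := by
    calc (s - t) • ((s • E - A)⁻¹ * A * (t • E - A)⁻¹)
        = (s • E - A)⁻¹ * ((s - t) • A) * (t • E - A)⁻¹ := by
          simp [Matrix.mul_smul, Matrix.smul_mul]
      _ = t • ((s • E - A)⁻¹ * (s • E - A) * (t • E - A)⁻¹)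
          - s • ((s • E - A)⁻¹ * ((t • E - A) * (t • E - A)⁻¹)) := by
          rw [hA]; simp [Matrix.mul_sub, Matrix.sub_mul, Matrix.mul_smul,
            Matrix.smul_mul, Matrix.mul_assoc]
      _ = t • (t • E - A)⁻¹ - s • (s • E - A)⁻¹ := by
          rw [Matrix.nonsing_inv_mul _ hs, Matrix.mul_nonsing_inv _ ht]
          simp
  rw [← this, smul_smul, inv_mul_cancel₀ hd, one_smul]

lemma key2 {n : ℕ} (E A : Matrix (Fin n) (Fin n) ℂ) (hE : IsUnit E.det) (s : ℂ)
    (hs : IsUnit (s • E - A).det) :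
    (s • E - A)⁻¹ * A * E⁻¹ = s • (s • E - A)⁻¹ - E⁻¹ := by
  have h : A = s • E - (s • E - A) := by abel
  calc (s • E - A)⁻¹ * A * E⁻¹
      = s • ((s • E - A)⁻¹ * (E * E⁻¹)) - ((s • E - A)⁻¹ * (s • E - A)) * E⁻¹ := by
        conv_lhs => rw [h]
        simp [Matrix.mul_sub, Matrix.sub_mul, Matrix.mul_smul, Matrix.smul_mul,
          Matrix.mul_assoc]
    _ = s • (s • E - A)⁻¹ - E⁻¹ := by
        rw [Matrix.mul_nonsing_inv _ hE, Matrix.nonsing_inv_mul _ hs]; simp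

lemma key3 {n : ℕ} (E A : Matrix (Fin n) (Fin n) ℂ) (hE : IsUnit E.det) (t : ℂ)
    (ht : IsUnit (t • E - A).det) :
    E⁻¹ * A * (t • E - A)⁻¹ = t • (t • E - A)⁻¹ - E⁻¹ := by
  have h : A = t • E - (t • E - A) := by abel
  calc E⁻¹ * A * (t • E - A)⁻¹
      = t • ((E⁻¹ * E) * (t • E - A)⁻¹) - E⁻¹ * ((t • E - A) * (t • E - A)⁻¹) := by
        conv_lhs => rw [h]
        simp [Matrix.mul_sub, Matrix.sub_mul, Matrix.mul_smul, Matrix.smul_mul,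
          Matrix.mul_assoc]
    _ = t • (t • E - A)⁻¹ - E⁻¹ := by
        rw [Matrix.nonsing_inv_mul _ hE, Matrix.mul_nonsing_inv _ ht]; simp

lemma sandwich {n : ℕ} (c b : Fin n → ℂ) (M A N : Matrix (Fin n) (Fin n) ℂ) :
    (c ᵥ* M) ⬝ᵥ (A *ᵥ (N *ᵥ b)) = c ⬝ᵥ ((M * A * N) *ᵥ b) := by
  simp [Matrix.dotProduct_mulVec, Matrix.vecMul_vecMul, Matrix.mul_assoc]

lemma smul_form {n : ℕ} (a d : ℂ) (u w : Fin n → ℂ) (A : Matrix (Fin n) (Fin n) ℂ) :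
    (fun i => a * u i) ⬝ᵥ (A *ᵥ fun i => d * w i) = a * d * (u ⬝ᵥ (A *ᵥ w)) := by
  have h1 : (fun i => a * u i) = a • u := rfl
  have h2 : (fun i => d * w i) = d • w := rfl
  rw [h1, h2, Matrix.mulVec_smul, smul_dotProduct, dotProduct_smul,
    smul_eq_mul, smul_eq_mul]
  ring

/-- Proposition 3 (quadrature-based shifted Loewner matrix from data):
the entries of `M̃ = K A Ũ` are expressible via transfer function samples. -/
theorem quad_shifted_loewner_entries {n ℓp ℓq : ℕ} (hn : 0 < n)
    (E A : Matrix (Fin n) (Fin n) ℂ) (hE : IsUnit E.det)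
    (b c : Fin n → ℂ)
    (ζ : Fin ℓp → ℝ) (ω : Fin ℓq → ℝ)
    (ρ : Fin ℓp → ℝ) (ρinf : ℝ) (φ : Fin ℓq → ℝ) (φinf : ℝ)
    (hnodes : ∀ (k : Fin ℓq) (j : Fin ℓp), ω k ≠ ζ j)
    (hζ : ∀ j : Fin ℓp, IsUnit ((Complex.I * (ζ j : ℂ)) • E - A).det)
    (hω : ∀ k : Fin ℓq, IsUnit ((Complex.I * (ω k : ℂ)) • E - A).det)
    (Ut : Matrix (Fin n) (Fin (ℓp + 1)) ℂ)
    (K : Matrix (Fin (ℓq + 1)) (Fin n) ℂ)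
    (hUt : ∀ (i : Fin n) (j : Fin ℓp),
      Ut i (Fin.castSucc j) =
        (ρ j : ℂ) * ((((Complex.I * (ζ j : ℂ)) • E - A)⁻¹ *ᵥ b) i))
    (hUtinf : ∀ i : Fin n, Ut i (Fin.last ℓp) = (ρinf : ℂ) * ((E⁻¹ *ᵥ b) i))
    (hK : ∀ (k : Fin ℓq) (i : Fin n),
      K (Fin.castSucc k) i =
        (φ k : ℂ) * ((c ᵥ* ((Complex.I * (ω k : ℂ)) • E - A)⁻¹) i))
    (hKinf : ∀ i : Fin n, K (Fin.last ℓq) i = (φinf : ℂ) * ((c ᵥ* E⁻¹) i)) :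
    (∀ (k : Fin ℓq) (j : Fin ℓp),
      (K * A * Ut) (Fin.castSucc k) (Fin.castSucc j) =
        -((φ k : ℂ) * (ρ j : ℂ)) *
          ((Complex.I * (ω k : ℂ) * transferFun E A b c (Complex.I * (ω k : ℂ)) -
              Complex.I * (ζ j : ℂ) * transferFun E A b c (Complex.I * (ζ j : ℂ))) /
            (Complex.I * (ω k : ℂ) - Complex.I * (ζ j : ℂ)))) ∧
    (∀ k : Fin ℓq,
      (K * A * Ut) (Fin.castSucc k) (Fin.last ℓp) =
        (φ k : ℂ) * (ρinf : ℂ) *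
          (Complex.I * (ω k : ℂ) * transferFun E A b c (Complex.I * (ω k : ℂ)) -
            markov0 E b c)) ∧
    (∀ j : Fin ℓp,
      (K * A * Ut) (Fin.last ℓq) (Fin.castSucc j) =
        (φinf : ℂ) * (ρ j : ℂ) *
          (Complex.I * (ζ j : ℂ) * transferFun E A b c (Complex.I * (ζ j : ℂ)) -
            markov0 E b c)) ∧
    (K * A * Ut) (Fin.last ℓq) (Fin.last ℓp) =
      (φinf : ℂ) * (ρinf : ℂ) * markov1 E A b c := by
  refine ⟨fun k j => ?_, fun k => ?_, fun j => ?_, ?_⟩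
  · -- interior entry
    set s := Complex.I * (ω k : ℂ) with hsdef
    set t := Complex.I * (ζ j : ℂ) with htdef
    have hst : s ≠ t := by
      intro h
      have : (ω k : ℂ) = (ζ j : ℂ) :=
        mul_left_cancel₀ Complex.I_ne_zero h
      exact hnodes k j (by exact_mod_cast this)
    have hd : s - t ≠ 0 := sub_ne_zero.mpr hst
    rw [triple_entry K A Ut _ _
        (fun i => (φ k : ℂ) * ((c ᵥ* (s • E - A)⁻¹) i))
        (fun i => (ρ j : ℂ) * (((t • E - A)⁻¹ *ᵥ b) i))
        (hK k) (fun i => hUt i j),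
      smul_form, sandwich, key1 E A s t (hω k) (hζ j) hst]
    simp only [smul_mulVec, Matrix.sub_mulVec, dotProduct_smul,
      dotProduct_sub, smul_eq_mul]
    rw [transferFun, transferFun, div_eq_mul_inv]
    ring
  · set s := Complex.I * (ω k : ℂ) with hsdef
    rw [triple_entry K A Ut _ _
        (fun i => (φ k : ℂ) * ((c ᵥ* (s • E - A)⁻¹) i))
        (fun i => (ρinf : ℂ) * ((E⁻¹ *ᵥ b) i))
        (hK k) hUtinf,
      smul_form, sandwich, key2 E A hE s (hω k)]
    simp only [smul_mulVec, Matrix.sub_mulVec, dotProduct_smul,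
      dotProduct_sub, smul_eq_mul]
    rw [transferFun, markov0]
  · set t := Complex.I * (ζ j : ℂ) with htdef
    rw [triple_entry K A Ut _ _
        (fun i => (φinf : ℂ) * ((c ᵥ* E⁻¹) i))
        (fun i => (ρ j : ℂ) * (((t • E - A)⁻¹ *ᵥ b) i))
        hKinf (fun i => hUt i j),
      smul_form, sandwich, key3 E A hE t (hζ j)]
    simp only [smul_mulVec, Matrix.sub_mulVec, dotProduct_smul,
      dotProduct_sub, smul_eq_mul]
    rw [transferFun, markov0]
  · rw [triple_entry K A Ut _ _
        (fun i => (φinf : ℂ) * ((c ᵥ* E⁻¹) i))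
        (fun i => (ρinf : ℂ) * ((E⁻¹ *ᵥ b) i))
        hKinf hUtinf,
      smul_form, sandwich, markov1]
end
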